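/- Let $U$ be a unitary operator on a Hilbert space $\mathcal{H}$, and let $\mathcal{K}, \mathcal{K}_+, \mathcal{K}_-$ be closed linear subspaces of $\mathcal{H}$ with $\mathcal{K} \subseteq \mathcal{K}_+ \cap \mathcal{K}_-$, $\dim(\mathcal{K}_+/\mathcal{K}) = \dim(\mathcal{K}_- /\mathcal{K}) = 1$, $U(\mathcal{K}) \subseteq \mathcal{K}_+$, $U^{-1}(\mathcal{K}) \subseteq \mathcal{K}_-$, $U(\mathcal{K}) \not\subseteq \mathcal{K}$, and $U^{-1}(\mathcal{K}) \not\subseteq \mathcal{K}$. Then there exist a unitary operator $V$ on $\mathcal{K}$ and a bounded linear operator $A : \mathcal{K} \to \mathcal{H}$ of rank at most $1$ such that $U|_{\mathcal{K}} = V + A$ (viewing $V$ as a map into $\mathcal{H}$). -/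

import Mathlib

/-!
Let `e` and `g` be normal vectors of `K` in `K₊` and `K₋`. For `x ∈ K` we have `U x ∈ K` iff
`⟪e, U x⟫ = ⟪U⁻¹ e, x⟫` vanishes, i.e. iff `x ⊥ m` with `m` the normalised projection of `U⁻¹ e`
onto `K`; likewise `U⁻¹ y ∈ K` iff `y ⊥ k` with `k` the normalised projection of `U g`. So `U`
maps `K ⊖ m` isometrically onto `K ⊖ k`, and `V x = U x + ⟪m, x⟫ (k - U m)`, which agrees with `U`
on `K ⊖ m` and sends `m` to `k`, is a unitary of `K` differing from `U` by the rank-one operator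
`x ↦ ⟪m, x⟫ (U m - k)`. Since neither `U K ⊆ K` nor `U⁻¹ K ⊆ K`, these projections are nonzero.
-/

open scoped InnerProductSpace

theorem LinearMap.rank_range_smulRight_le_one {R M N : Type*} [DivisionRing R] [AddCommGroup M]
    [Module R M] [AddCommGroup N] [Module R N] (f : M →ₗ[R] R) (x : N) :
    Module.rank R (LinearMap.range (f.smulRight x)) ≤ 1 := by
  have hle : LinearMap.range (f.smulRight x) ≤ Submodule.span R {x} := by
    rintro _ ⟨y, rfl⟩
    exact Submodule.smul_mem _ _ (Submodule.mem_span_singleton_self x)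
  calc Module.rank R (LinearMap.range (f.smulRight x))
      ≤ Module.rank R (Submodule.span R {x}) := Submodule.rank_mono hle
    _ ≤ 1 := by simpa using rank_span_le (R := R) {x}

theorem Submodule.exists_forall_sub_smul_mem_of_finrank_quotient_eq_one {R M : Type*}
    [DivisionRing R] [AddCommGroup M] [Module R M] {K P : Submodule R M}
    (h : Module.finrank R (P ⧸ K.comap P.subtype) = 1) :
    ∃ y : M, ∀ x ∈ P, ∃ c : R, x - c • y ∈ K := by
  obtain ⟨q, -, hq⟩ := finrank_eq_one_iff'.mp h
  obtain ⟨y, rfl⟩ := Submodule.mkQ_surjective _ q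
  refine ⟨y, fun x hx => ?_⟩
  obtain ⟨c, hc⟩ := hq (Submodule.mkQ _ ⟨x, hx⟩)
  have hxy : Submodule.Quotient.mk (p := K.comap P.subtype) ⟨x, hx⟩
      = Submodule.Quotient.mk (c • y) := by
    rw [Submodule.Quotient.mk_smul]
    exact hc.symm
  exact ⟨c, by simpa using (Submodule.Quotient.eq _).mp hxy⟩

section

variable {𝕜 E : Type*} [RCLike 𝕜] [NormedAddCommGroup E] [InnerProductSpace 𝕜 E]

theorem Submodule.exists_mem_orthogonal_forall_sub_smul_mem {K P : Submodule 𝕜 E}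
    [K.HasOrthogonalProjection] (h : Module.finrank 𝕜 (P ⧸ K.comap P.subtype) = 1) :
    ∃ e ∈ Kᗮ, ∀ x ∈ P, ∃ c : 𝕜, x - c • e ∈ K := by
  obtain ⟨y, hy⟩ := exists_forall_sub_smul_mem_of_finrank_quotient_eq_one h
  refine ⟨y - K.starProjection y, K.sub_starProjection_mem_orthogonal y, fun x hx => ?_⟩
  obtain ⟨c, hc⟩ := hy x hx
  have hsplit : x - c • (y - K.starProjection y) = (x - c • y) + c • K.starProjection y := by
    module
  exact ⟨c, hsplit ▸ K.add_mem hc (K.smul_mem c (K.starProjection_apply_mem y))⟩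

theorem Submodule.inner_eq_zero_iff_mem_of_sub_smul_mem {K : Submodule 𝕜 E} {e y : E} {c : 𝕜}
    (he : e ∈ Kᗮ) (hy : y - c • e ∈ K) : ⟪e, y⟫_𝕜 = 0 ↔ y ∈ K := by
  refine ⟨fun h => ?_, fun h => Submodule.inner_left_of_mem_orthogonal h he⟩
  have hce : c • e = 0 := by
    have := Submodule.inner_left_of_mem_orthogonal hy he
    rw [inner_sub_right, inner_smul_right, h, zero_sub, neg_eq_zero, mul_eq_zero,
      inner_self_eq_zero] at this
    exact smul_eq_zero.mpr this
  simpa [hce] using hy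

theorem inner_sub_inner_smul_self_eq_zero {m : E} (hm : ‖m‖ = 1) (x : E) :
    ⟪m, x - ⟪m, x⟫_𝕜 • m⟫_𝕜 = 0 := by
  rw [inner_sub_right, inner_smul_right, inner_self_eq_norm_sq_to_K, hm]
  simp

theorem norm_add_smul_sq_of_inner_eq_zero {z m : E} (hm : ‖m‖ = 1) (h : ⟪m, z⟫_𝕜 = 0)
    (c : 𝕜) : ‖z + c • m‖ ^ 2 = ‖z‖ ^ 2 + ‖c‖ ^ 2 := by
  have := norm_add_sq_eq_norm_sq_add_norm_sq_of_inner_eq_zero z (c • m)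
    (by rw [inner_smul_right, inner_eq_zero_symm.mp h, mul_zero])
  rw [norm_smul, hm, mul_one] at this
  simpa only [sq] using this

namespace LinearIsometryEquiv

theorem exists_unit_forall_inner_eq_zero_iff_apply_mem (U : E ≃ₗᵢ[𝕜] E) {K : Submodule 𝕜 E}
    [K.HasOrthogonalProjection] {e : E} (he : e ∈ Kᗮ)
    (hU : ∀ x ∈ K, ∃ c : 𝕜, U x - c • e ∈ K) (hUK : ¬ ∀ x ∈ K, U x ∈ K) :
    ∃ m ∈ K, ‖m‖ = 1 ∧ ∀ x ∈ K, ⟪m, x⟫_𝕜 = 0 ↔ U x ∈ K := by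
  set u := K.starProjection (U.symm e)
  have hu : ∀ x ∈ K, ⟪u, x⟫_𝕜 = ⟪e, U x⟫_𝕜 := fun x hx => by
    rw [K.inner_starProjection_left_eq_right, K.starProjection_eq_self_iff.mpr hx,
      ← U.inner_map_map, U.apply_symm_apply]
  have hmem : ∀ x ∈ K, ⟪u, x⟫_𝕜 = 0 ↔ U x ∈ K := fun x hx => by
    obtain ⟨c, hc⟩ := hU x hx
    rw [hu x hx, K.inner_eq_zero_iff_mem_of_sub_smul_mem he hc]
  have hu0 : u ≠ 0 := fun h0 => hUK fun x hx => (hmem x hx).mp (by simp [h0])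
  refine ⟨(‖u‖⁻¹ : 𝕜) • u, K.smul_mem _ (K.starProjection_apply_mem _), norm_smul_inv_norm hu0,
    fun x hx => ?_⟩
  rw [inner_smul_left, mul_eq_zero, hmem x hx]
  simp [hu0]

theorem exists_linearIsometryEquiv_apply_eq_add_inner_smul (U : E ≃ₗᵢ[𝕜] E)
    {K : Submodule 𝕜 E} {m k : E} (hmK : m ∈ K) (hkK : k ∈ K) (hm1 : ‖m‖ = 1) (hk1 : ‖k‖ = 1)
    (hm : ∀ x ∈ K, ⟪m, x⟫_𝕜 = 0 ↔ U x ∈ K) (hk : ∀ x ∈ K, ⟪k, x⟫_𝕜 = 0 ↔ U.symm x ∈ K) :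
    ∃ V : K ≃ₗᵢ[𝕜] K, ∀ x : K, (V x : E) = U x + ⟪m, x⟫_𝕜 • (k - U m) := by
  have hz : ∀ x ∈ K, U (x - ⟪m, x⟫_𝕜 • m) ∈ K ∧ ⟪k, U (x - ⟪m, x⟫_𝕜 • m)⟫_𝕜 = 0 := by
    intro x hx
    have hzK : x - ⟪m, x⟫_𝕜 • m ∈ K := K.sub_mem hx (K.smul_mem _ hmK)
    have hUz := (hm _ hzK).mp (inner_sub_inner_smul_self_eq_zero hm1 x)
    exact ⟨hUz, (hk _ hUz).mpr (by simpa using hzK)⟩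
  let L : E →ₗ[𝕜] E := U.toLinearMap + (innerₛₗ 𝕜 m).smulRight (k - U m)
  have hL : ∀ x, L x = U (x - ⟪m, x⟫_𝕜 • m) + ⟪m, x⟫_𝕜 • k := fun x => by
    simp only [L, LinearMap.add_apply, LinearMap.smulRight_apply, coe_innerₛₗ_apply,
      map_sub, map_smul]
    module
  have hLK : ∀ x ∈ K, L x ∈ K := fun x hx => by
    rw [hL]
    exact K.add_mem (hz x hx).1 (K.smul_mem _ hkK)
  have hLnorm : ∀ x ∈ K, ‖L x‖ = ‖x‖ := by
    intro x hx
    have hx' : ‖x‖ ^ 2 = ‖x - ⟪m, x⟫_𝕜 • m‖ ^ 2 + ‖⟪m, x⟫_𝕜‖ ^ 2 := by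
      rw [← norm_add_smul_sq_of_inner_eq_zero hm1 (inner_sub_inner_smul_self_eq_zero hm1 x),
        sub_add_cancel]
    have hLx : ‖L x‖ ^ 2 = ‖x - ⟪m, x⟫_𝕜 • m‖ ^ 2 + ‖⟪m, x⟫_𝕜‖ ^ 2 := by
      rw [hL, norm_add_smul_sq_of_inner_eq_zero hk1 (hz x hx).2, U.norm_map]
    exact (sq_eq_sq₀ (norm_nonneg _) (norm_nonneg _)).mp (hLx.trans hx'.symm)
  have hLsurj : ∀ y ∈ K, ∃ x ∈ K, L x = y := by
    intro y hy
    set w := y - ⟪k, y⟫_𝕜 • k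
    have hwK : w ∈ K := K.sub_mem hy (K.smul_mem _ hkK)
    have hw : U.symm w ∈ K := (hk w hwK).mp (inner_sub_inner_smul_self_eq_zero hk1 y)
    have hmw : ⟪m, U.symm w⟫_𝕜 = 0 := (hm _ hw).mpr (by simpa using hwK)
    refine ⟨U.symm w + ⟪k, y⟫_𝕜 • m, K.add_mem hw (K.smul_mem _ hmK), ?_⟩
    have hmx : ⟪m, U.symm w + ⟪k, y⟫_𝕜 • m⟫_𝕜 = ⟪k, y⟫_𝕜 := by
      rw [inner_add_right, hmw, inner_smul_right, inner_self_eq_norm_sq_to_K, hm1]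
      simp
    rw [hL, hmx, map_sub, map_add, map_smul, U.apply_symm_apply]
    module
  let V₀ : K →ₗᵢ[𝕜] K := ⟨L.restrict hLK, fun x => hLnorm x x.2⟩
  refine ⟨.ofSurjective V₀ fun y => ?_, fun x => rfl⟩
  obtain ⟨x, hx, hxy⟩ := hLsurj y y.2
  exact ⟨⟨x, hx⟩, Subtype.ext hxy⟩

end LinearIsometryEquiv

end

theorem stmt_10 {H : Type*} [NormedAddCommGroup H] [InnerProductSpace ℂ H] [CompleteSpace H]
    (U : H ≃ₗᵢ[ℂ] H) (K Kp Km : Submodule ℂ H)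
    (hKc : IsClosed (K : Set H))
    (hdimp : Module.finrank ℂ (Kp ⧸ K.comap Kp.subtype) = 1)
    (hdimm : Module.finrank ℂ (Km ⧸ K.comap Km.subtype) = 1)
    (hUK : ∀ x ∈ K, U x ∈ Kp) (hUinvK : ∀ x ∈ K, U.symm x ∈ Km)
    (hUKn : ¬ ∀ x ∈ K, U x ∈ K) (hUinvKn : ¬ ∀ x ∈ K, U.symm x ∈ K) :
    ∃ (V : K ≃ₗᵢ[ℂ] K) (A : K →L[ℂ] H),
      Module.rank ℂ (LinearMap.range (A : K →ₗ[ℂ] H)) ≤ 1 ∧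
      ∀ x : K, U (x : H) = (V x : H) + A x := by
  have : CompleteSpace K := hKc.completeSpace_coe
  obtain ⟨e, he, hKpe⟩ := K.exists_mem_orthogonal_forall_sub_smul_mem hdimp
  obtain ⟨g, hg, hKmg⟩ := K.exists_mem_orthogonal_forall_sub_smul_mem hdimm
  obtain ⟨m, hmK, hm1, hm⟩ := U.exists_unit_forall_inner_eq_zero_iff_apply_mem he
    (fun x hx => hKpe _ (hUK x hx)) hUKn
  obtain ⟨k, hkK, hk1, hk⟩ := U.symm.exists_unit_forall_inner_eq_zero_iff_apply_mem hg
    (fun x hx => hKmg _ (hUinvK x hx)) hUinvKn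
  obtain ⟨V, hV⟩ := U.exists_linearIsometryEquiv_apply_eq_add_inner_smul hmK hkK hm1 hk1 hm hk
  refine ⟨V, ((innerSL ℂ m).comp K.subtypeL).smulRight (U m - k),
    LinearMap.rank_range_smulRight_le_one _ _, fun x => ?_⟩
  rw [hV]
  simp only [ContinuousLinearMap.smulRight_apply, ContinuousLinearMap.comp_apply,
    innerSL_apply_apply, Submodule.subtypeL_apply]
  module
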